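/- Define h:[0,∞)→ℝ by h(x) = x for x ∈ [0,1) and h(x) = 2^{−k}x + 2^{k+1} − 2 for x ∈ [4^k, 4^{k+1}), k = 0,1,2,…, and define g:[0,1]→ℝ by g(x) = x·h(−log₂ x) for x ∈ (0,1] and g(0) = 0. Then: (i) h is concave, subadditive (h(x+y) ≤ h(x) + h(y)), nondecreasing, h(x) → ∞ as x → ∞ and h(x)/x → 0 as x → ∞; (ii) g is concave on [0,1] with g(0) = lim_{x→0⁺} g(x) = 0, g is subderivative (g(xy) ≤ x·g(y) + y·g(x) for all x,y ∈ [0,1]), lim_{x→0⁺} g(x)/η(x) = 0 where η(x) = −x log₂ x, and lim_{x→0⁺} g(x)/x = ∞. -/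

import Mathlib

open Filter Set

/-- The Iksanov–Rösler function: `h(x) = x` on `[0,1)` and
`h(x) = 2^{−k}·x + 2^{k+1} − 2` for `x ∈ [4^k, 4^{k+1})`, `k = 0,1,2,…`
(for `x ≥ 1` one has `k = ⌊log₄ x⌋`). -/
noncomputable def hIR : ℝ → ℝ := fun x =>
  if x < 1 then x
  else (2 : ℝ) ^ (-⌊Real.logb 4 x⌋) * x + (2 : ℝ) ^ (⌊Real.logb 4 x⌋ + 1) - 2

/-- `g(x) = x·h(−log₂ x)` for `x ∈ (0,1]`, `g(0) = 0`. -/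
noncomputable def gIR : ℝ → ℝ := fun x =>
  if x = 0 then 0 else x * hIR (-Real.logb 2 x)

/-- The Shannon function `η(x) = −x·log₂ x`. -/
noncomputable def shannonF : ℝ → ℝ := fun x => -(x * Real.logb 2 x)


/-!
`h` is the lower envelope of the lines `a_k(x) = 2^{-k} x + 2^{k+1} - 2`, and it coincides
with the `k`-th line on `[4^k, 4^{k+1})`: two consecutive lines cross at `x = 4^{k+1}`. An
infimum of increasing affine functions is concave and nondecreasing, and with `h 0 = 0`
concavity gives subadditivity. On `[4^k, 4^{k+1})` we have `2^k ≤ √x < 2^{k+1}`, whence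
`√x ≤ h x ≤ 4 √x`, which yields both growth statements.

Likewise `g x = x h(-log₂ x)` is the lower envelope of `2^{-k} η(x) + (2^{k+1} - 2) x`, each
concave because `η` is, so `g` is concave. Subderivativity is subadditivity of `h` transported
by `log₂ (x y) = log₂ x + log₂ y`, and `g x / η x = h(t) / t`, `g x / x = h(t)` with
`t = -log₂ x → ∞`.
-/

open Real

theorem ConcaveOn.of_le_of_exists_eq {ι 𝕜 E β : Type*} [Nonempty ι] [Semiring 𝕜] [PartialOrder 𝕜]
    [AddCommMonoid E] [AddCommMonoid β] [PartialOrder β] [IsOrderedAddMonoid β] [SMul 𝕜 E]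
    [SMul 𝕜 β] [PosSMulMono 𝕜 β] {s : Set E} {f : E → β} {F : ι → E → β}
    (hF : ∀ i, ConcaveOn 𝕜 s (F i)) (hle : ∀ i, ∀ x ∈ s, f x ≤ F i x)
    (heq : ∀ x ∈ s, ∃ i, F i x = f x) : ConcaveOn 𝕜 s f := by
  have hs := (hF (Classical.arbitrary ι)).1
  refine ⟨hs, fun x hx y hy a b ha hb hab => ?_⟩
  obtain ⟨i, hi⟩ := heq _ (hs hx hy ha hb hab)
  calc a • f x + b • f y ≤ a • F i x + b • F i y := by
        gcongr
        exacts [hle i x hx, hle i y hy]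
    _ ≤ F i (a • x + b • y) := (hF i).2 hx hy ha hb hab
    _ = f (a • x + b • y) := hi

theorem MonotoneOn.of_le_of_exists_eq {ι α β : Type*} [Preorder α] [Preorder β] {s : Set α}
    {f : α → β} {F : ι → α → β} (hF : ∀ i, MonotoneOn (F i) s) (hle : ∀ i, ∀ x ∈ s, f x ≤ F i x)
    (heq : ∀ x ∈ s, ∃ i, F i x = f x) : MonotoneOn f s := by
  intro x hx y hy hxy
  obtain ⟨i, hi⟩ := heq y hy
  exact (hle i x hx).trans (hi ▸ hF i hx hy hxy)

theorem ConcaveOn.map_add_le {f : ℝ → ℝ} (hf : ConcaveOn ℝ (Ici 0) f) (hf₀ : 0 ≤ f 0) {x y : ℝ}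
    (hx : 0 ≤ x) (hy : 0 ≤ y) : f (x + y) ≤ f x + f y := by
  rcases (add_nonneg hx hy).eq_or_lt with hs | hs
  · obtain rfl : x = 0 := by linarith
    obtain rfl : y = 0 := by linarith
    simpa using hf₀
  have hfrac : ∀ t, 0 ≤ t → t ≤ x + y → t / (x + y) * f (x + y) ≤ f t := by
    intro t ht hts
    have hw : 0 ≤ 1 - t / (x + y) := sub_nonneg.2 ((div_le_one hs).2 hts)
    have := hf.2 (mem_Ici.2 hs.le) self_mem_Ici (div_nonneg ht hs.le) hw (add_sub_cancel _ _)
    simp only [smul_eq_mul, mul_zero, add_zero, div_mul_cancel₀ _ hs.ne'] at this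
    linarith [mul_nonneg hw hf₀]
  have hsum : x / (x + y) * f (x + y) + y / (x + y) * f (x + y) = f (x + y) := by
    field_simp
  linarith [hfrac x hx (by linarith), hfrac y hy (by linarith)]

noncomputable def hIRPiece (k : ℕ) (x : ℝ) : ℝ := x / 2 ^ k + 2 * 2 ^ k - 2

lemma four_pow_eq_sq_two_pow (k : ℕ) : (4 : ℝ) ^ k = (2 ^ k) ^ 2 := by
  rw [← pow_mul, mul_comm, pow_mul]; norm_num

lemma hIRPiece_sub_hIRPiece (j k : ℕ) (x : ℝ) :
    hIRPiece j x - hIRPiece k x = (2 ^ j - 2 ^ k) * (2 * 2 ^ j * 2 ^ k - x) / (2 ^ j * 2 ^ k) := by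
  unfold hIRPiece
  field_simp
  ring

lemma hIRPiece_le_of_le {j k : ℕ} (hkj : k ≤ j) {x : ℝ} (hx : x ≤ 4 ^ (k + 1)) :
    hIRPiece k x ≤ hIRPiece j x := by
  rcases hkj.eq_or_lt with rfl | hlt
  · rfl
  have hpow : (2 : ℝ) ^ (k + 1) ≤ 2 ^ j := pow_le_pow_right₀ one_le_two hlt
  rw [pow_succ] at hpow
  rw [pow_succ, four_pow_eq_sq_two_pow] at hx
  rw [← sub_nonneg, hIRPiece_sub_hIRPiece]
  have h2k : (0 : ℝ) < 2 ^ k := by positivity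
  exact div_nonneg (mul_nonneg (by linarith) (by nlinarith)) (by positivity)

lemma hIRPiece_le_of_ge {j k : ℕ} (hjk : j ≤ k) {x : ℝ} (hx : 4 ^ k ≤ x) :
    hIRPiece k x ≤ hIRPiece j x := by
  rcases hjk.eq_or_lt with rfl | hlt
  · rfl
  have hpow : (2 : ℝ) ^ (j + 1) ≤ 2 ^ k := pow_le_pow_right₀ one_le_two hlt
  rw [pow_succ] at hpow
  rw [four_pow_eq_sq_two_pow] at hx
  rw [← sub_nonneg, hIRPiece_sub_hIRPiece]
  have h2j : (0 : ℝ) < 2 ^ j := by positivity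
  exact div_nonneg (mul_nonneg_of_nonpos_of_nonpos (by linarith) (by nlinarith)) (by positivity)

lemma hIR_of_lt_one {x : ℝ} (hx : x < 1) : hIR x = hIRPiece 0 x := by
  simp [hIR, hx, hIRPiece]

lemma hIR_eq_hIRPiece {k : ℕ} {x : ℝ} (hk : 4 ^ k ≤ x) (hx : x < 4 ^ (k + 1)) :
    hIR x = hIRPiece k x := by
  have hx₀ : 0 < x := lt_of_lt_of_le (by positivity) hk
  have hlog : ∀ n : ℕ, logb 4 ((4 : ℝ) ^ n) = n := fun n => by
    rw [logb_pow, logb_self_eq_one (by norm_num), mul_one]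
  have hfloor : ⌊logb 4 x⌋ = k := by
    rw [Int.floor_eq_iff]
    constructor
    · simpa [hlog] using logb_le_logb_of_le (by norm_num : (1 : ℝ) < 4) (by positivity) hk
    · simpa [hlog] using logb_lt_logb (by norm_num : (1 : ℝ) < 4) hx₀ hx
  have hge : ¬ x < 1 := not_lt.2 ((one_le_pow₀ (by norm_num)).trans hk)
  simp only [hIR, if_neg hge, hfloor, hIRPiece]
  rw [zpow_neg, zpow_add_one₀ two_ne_zero, zpow_natCast]
  ring

lemma exists_hIR_eq_hIRPiece (x : ℝ) :
    ∃ k, hIR x = hIRPiece k x ∧ x ≤ 4 ^ (k + 1) ∧ (k = 0 ∨ 4 ^ k ≤ x) := by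
  rcases lt_or_ge x 1 with h1 | h1
  · exact ⟨0, hIR_of_lt_one h1, by norm_num; linarith, .inl rfl⟩
  obtain ⟨k, hk, hk'⟩ := exists_nat_pow_near h1 (by norm_num : (1 : ℝ) < 4)
  exact ⟨k, hIR_eq_hIRPiece hk hk', hk'.le, .inr hk⟩

lemma hIR_le_hIRPiece (j : ℕ) (x : ℝ) : hIR x ≤ hIRPiece j x := by
  obtain ⟨k, hk, hup, hlow⟩ := exists_hIR_eq_hIRPiece x
  rw [hk]
  rcases le_total k j with hkj | hjk
  · exact hIRPiece_le_of_le hkj hup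
  rcases hlow with rfl | hlow
  · rw [Nat.le_zero.1 hjk]
  · exact hIRPiece_le_of_ge hjk hlow

lemma concaveOn_hIRPiece (k : ℕ) : ConcaveOn ℝ (Ici 0) (hIRPiece k) :=
  (((concaveOn_id (convex_Ici 0)).smul (inv_nonneg.2 (pow_nonneg zero_le_two k))).add_const
    (2 * 2 ^ k - 2)).congr fun x _ => by simp only [hIRPiece, id, smul_eq_mul, Pi.add_apply]; ring

lemma hIR_concaveOn : ConcaveOn ℝ (Ici 0) hIR :=
  .of_le_of_exists_eq concaveOn_hIRPiece (fun k x _ => hIR_le_hIRPiece k x)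
    fun x _ => (exists_hIR_eq_hIRPiece x).imp fun _ h => h.1.symm

lemma hIR_monotoneOn : MonotoneOn hIR (Ici 0) :=
  .of_le_of_exists_eq (fun k _ _ _ _ hxy => by unfold hIRPiece; gcongr)
    (fun k x _ => hIR_le_hIRPiece k x)
    fun x _ => (exists_hIR_eq_hIRPiece x).imp fun _ h => h.1.symm

lemma hIR_mem_Icc_sqrt {x : ℝ} (hx : 1 ≤ x) : hIR x ∈ Icc (√x) (4 * √x) := by
  obtain ⟨k, hk, hk'⟩ := exists_nat_pow_near hx (by norm_num : (1 : ℝ) < 4)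
  rw [hIR_eq_hIRPiece hk hk', hIRPiece, mem_Icc]
  rw [four_pow_eq_sq_two_pow] at hk
  rw [pow_succ, four_pow_eq_sq_two_pow] at hk'
  set v : ℝ := 2 ^ k
  have hv : 1 ≤ v := one_le_pow₀ one_le_two
  have hss : √x * √x = x := mul_self_sqrt (by linarith)
  have hvr : v ≤ √x := (le_sqrt (by positivity) (by linarith)).2 hk
  have hrv : √x ≤ 2 * v := by nlinarith [sqrt_nonneg x]
  have hlow : √x ≤ x / v := (le_div_iff₀ (by positivity)).2 (by nlinarith [sqrt_nonneg x])
  have hup : x / v ≤ 2 * √x := (div_le_iff₀ (by positivity)).2 (by nlinarith [sqrt_nonneg x])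
  constructor <;> linarith

lemma hIR_zero : hIR 0 = 0 := by simp [hIR]

lemma hIR_add_le {x y : ℝ} (hx : 0 ≤ x) (hy : 0 ≤ y) : hIR (x + y) ≤ hIR x + hIR y :=
  hIR_concaveOn.map_add_le hIR_zero.ge hx hy

lemma hIR_tendsto_atTop : Tendsto hIR atTop atTop :=
  tendsto_atTop_mono' atTop ((eventually_ge_atTop 1).mono fun _ hx =>
    (hIR_mem_Icc_sqrt hx).1) tendsto_sqrt_atTop

lemma hIR_div_self_tendsto_zero : Tendsto (fun x => hIR x / x) atTop (nhds 0) := by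
  refine tendsto_of_tendsto_of_tendsto_of_le_of_le' tendsto_const_nhds
    (tendsto_const_nhds.div_atTop tendsto_sqrt_atTop : Tendsto (fun x => 4 / √x) _ _) ?_ ?_
  all_goals filter_upwards [eventually_ge_atTop 1] with x hx
  all_goals obtain ⟨hlow, hup⟩ := hIR_mem_Icc_sqrt hx
  · exact div_nonneg ((sqrt_nonneg x).trans hlow) (by linarith)
  · calc hIR x / x ≤ 4 * √x / x := by gcongr
      _ = 4 / √x := by rw [mul_div_assoc, sqrt_div_self']; ring

lemma gIR_eq (x : ℝ) : gIR x = x * hIR (-logb 2 x) := by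
  unfold gIR
  split_ifs with h <;> simp [h]

lemma shannonF_eq_mul_neg_logb (x : ℝ) : shannonF x = x * -logb 2 x := by
  simp [shannonF]

lemma shannonF_eq_negMulLog_div : shannonF = fun x => negMulLog x / log 2 := by
  ext x
  simp only [shannonF, negMulLog, logb]
  ring

lemma shannonF_concaveOn : ConcaveOn ℝ (Ici 0) shannonF := by
  rw [shannonF_eq_negMulLog_div]
  simpa only [smul_eq_mul, div_eq_inv_mul] using
    concaveOn_negMulLog.smul (inv_nonneg.2 (log_nonneg one_le_two))

lemma neg_logb_two_nonneg {x : ℝ} (hx : x ∈ Icc (0 : ℝ) 1) : 0 ≤ -logb 2 x :=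
  neg_nonneg.2 (logb_nonpos one_lt_two hx.1 hx.2)

lemma mul_hIRPiece_neg_logb (k : ℕ) (x : ℝ) :
    x * hIRPiece k (-logb 2 x) = (2 ^ k)⁻¹ * shannonF x + (2 * 2 ^ k - 2) * x := by
  simp only [hIRPiece, shannonF]
  ring

lemma concaveOn_mul_hIRPiece_neg_logb (k : ℕ) :
    ConcaveOn ℝ (Icc 0 1) fun x => x * hIRPiece k (-logb 2 x) := by
  have hlin : ConcaveOn ℝ (Icc 0 1) fun x : ℝ => (2 * 2 ^ k - 2) * x :=
    (LinearMap.mul ℝ ℝ (2 * 2 ^ k - 2)).concaveOn (convex_Icc 0 1)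
  refine (((shannonF_concaveOn.subset Icc_subset_Ici_self (convex_Icc 0 1)).smul
    (inv_nonneg.2 (pow_nonneg zero_le_two k))).add hlin).congr fun x _ => ?_
  simp only [mul_hIRPiece_neg_logb, smul_eq_mul, Pi.add_apply]

lemma gIR_concaveOn : ConcaveOn ℝ (Icc 0 1) gIR :=
  .of_le_of_exists_eq concaveOn_mul_hIRPiece_neg_logb
    (fun k x hx => by
      rw [gIR_eq]
      exact mul_le_mul_of_nonneg_left (hIR_le_hIRPiece k _) hx.1)
    fun x _ => (exists_hIR_eq_hIRPiece (-logb 2 x)).imp fun _ h => by rw [gIR_eq, h.1]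

lemma gIR_mul_le {x y : ℝ} (hx : x ∈ Icc (0 : ℝ) 1) (hy : y ∈ Icc (0 : ℝ) 1) :
    gIR (x * y) ≤ x * gIR y + y * gIR x := by
  rcases hx.1.eq_or_lt with rfl | hx₀
  · simp [gIR]
  rcases hy.1.eq_or_lt with rfl | hy₀
  · simp [gIR]
  rw [gIR_eq, gIR_eq, gIR_eq, logb_mul hx₀.ne' hy₀.ne', neg_add]
  calc x * y * hIR (-logb 2 x + -logb 2 y)
      ≤ x * y * (hIR (-logb 2 x) + hIR (-logb 2 y)) := by
        gcongr
        exact hIR_add_le (neg_logb_two_nonneg hx) (neg_logb_two_nonneg hy)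
    _ = x * (y * hIR (-logb 2 y)) + y * (x * hIR (-logb 2 x)) := by ring

lemma tendsto_neg_logb_two_nhdsGT_zero :
    Tendsto (fun x => -logb 2 x) (nhdsWithin 0 (Ioi 0)) atTop :=
  tendsto_neg_atBot_atTop.comp (tendsto_logb_nhdsGT_zero one_lt_two)

lemma shannonF_tendsto_nhdsGT_zero : Tendsto shannonF (nhdsWithin 0 (Ioi 0)) (nhds 0) := by
  rw [shannonF_eq_negMulLog_div]
  exact ((continuous_negMulLog.div_const _).tendsto' 0 0 (by simp)).mono_left nhdsWithin_le_nhds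

lemma gIR_div_shannonF_tendsto :
    Tendsto (fun x => gIR x / shannonF x) (nhdsWithin 0 (Ioi 0)) (nhds 0) := by
  refine (hIR_div_self_tendsto_zero.comp tendsto_neg_logb_two_nhdsGT_zero).congr' ?_
  filter_upwards [self_mem_nhdsWithin] with x (hx : 0 < x)
  rw [Function.comp_apply, gIR_eq, shannonF_eq_mul_neg_logb, mul_div_mul_left _ _ hx.ne']

lemma gIR_div_self_tendsto :
    Tendsto (fun x => gIR x / x) (nhdsWithin 0 (Ioi 0)) atTop := by
  refine (hIR_tendsto_atTop.comp tendsto_neg_logb_two_nhdsGT_zero).congr' ?_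
  filter_upwards [self_mem_nhdsWithin] with x (hx : 0 < x)
  rw [Function.comp_apply, gIR_eq, mul_div_cancel_left₀ _ hx.ne']

lemma gIR_tendsto_nhdsGT_zero : Tendsto gIR (nhdsWithin 0 (Ioi 0)) (nhds 0) := by
  have hη : ∀ᶠ x in nhdsWithin (0 : ℝ) (Ioi 0), shannonF x ≠ 0 := by
    filter_upwards [Ioo_mem_nhdsGT one_pos] with x hx
    rw [shannonF_eq_mul_neg_logb]
    exact mul_ne_zero hx.1.ne' (neg_ne_zero.2 (logb_neg one_lt_two hx.1 hx.2).ne)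
  simpa using (gIR_div_shannonF_tendsto.mul shannonF_tendsto_nhdsGT_zero).congr'
    (hη.mono fun x hx => div_mul_cancel₀ _ hx)

/-- Properties of the Iksanov–Rösler function `h` and of `g(x) = x·h(−log₂ x)`:
(i) `h` is concave, subadditive, nondecreasing on `[0,∞)`, `h(x) → ∞` and `h(x)/x → 0`
as `x → ∞`; (ii) `g` is concave on `[0,1]` with `g(0) = lim_{x→0⁺} g(x) = 0`,
subderivative, `lim_{x→0⁺} g(x)/η(x) = 0` and `lim_{x→0⁺} g(x)/x = ∞`. -/
theorem statement19 :
    ConcaveOn ℝ (Set.Ici 0) hIR ∧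
    (∀ x y : ℝ, 0 ≤ x → 0 ≤ y → hIR (x + y) ≤ hIR x + hIR y) ∧
    MonotoneOn hIR (Set.Ici 0) ∧
    Tendsto hIR atTop atTop ∧
    Tendsto (fun x => hIR x / x) atTop (nhds 0) ∧
    ConcaveOn ℝ (Set.Icc 0 1) gIR ∧
    gIR 0 = 0 ∧
    Tendsto gIR (nhdsWithin 0 (Set.Ioi 0)) (nhds 0) ∧
    (∀ x ∈ Set.Icc (0 : ℝ) 1, ∀ y ∈ Set.Icc (0 : ℝ) 1,
      gIR (x * y) ≤ x * gIR y + y * gIR x) ∧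
    Tendsto (fun x => gIR x / shannonF x) (nhdsWithin 0 (Set.Ioi 0)) (nhds 0) ∧
    Tendsto (fun x => gIR x / x) (nhdsWithin 0 (Set.Ioi 0)) atTop :=
  ⟨hIR_concaveOn, fun _ _ => hIR_add_le, hIR_monotoneOn, hIR_tendsto_atTop,
    hIR_div_self_tendsto_zero, gIR_concaveOn, by simp [gIR], gIR_tendsto_nhdsGT_zero,
    fun _ hx _ hy => gIR_mul_le hx hy, gIR_div_shannonF_tendsto, gIR_div_self_tendsto⟩
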